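/- arXiv:1704.05702 — 6 statements merged into one kernel-verified Lean document; each statement's English description precedes it below -/
import Mathlib

section
/- Let G = (V, ω, μ) be a locally finite connected weighted graph with D_μ < ∞ and with volume growth of positive degree m > 0, and let α > 0 with 0 < mα < 1. Then for every bounded, nonnegative, not identically zero initial value a : V → ℝ, there is no nonnegative global solution u : [0,∞) × V → ℝ of the semilinear heat equation ∂_t u(t,x) = Δu(t,x) + u(t,x)^{1+α} on (0,∞) × V with u(0,x) = a(x); i.e., the solution blows up in finite time. -/
/-!
Test the equation against `φ(t, x) = ((1 - t/R) θ(x))^(k+1)`, where `θ` is a cut-off equal to `1`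
on `B(x₀, R)`, vanishing off `B(x₀, 2R)` and changing by at most `1/R` along an edge. Summation by
parts moves the Laplacian onto `θ^(k+1)` at a cost of `(k+1) D_μ θ^k / R`; by Young's inequality
this and the time derivative of `φ` are absorbed into the reaction term `u^p φ`, `p = 1 + α`,
up to an error `((k+1)(D_μ+1)/R)^q` per unit of measure, `q = p/α`. Integrating over `[0, R]`
gives `μ(x₀) a(x₀) ≤ R · V(x₀, 3R) · O(R^(-q)) = O(R^(m+1-q))`, and `m α < 1` means `m + 1 < q`.
-/

open Set Real Filter Topology

noncomputable def graphLap {V : Type*} (ω : V → V → ℝ) (μ : V → ℝ)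
    (h : V → ℝ) (x : V) : ℝ :=
  (∑' y, ω x y * (h y - h x)) / μ x

lemma pow_succ_sub_pow_succ_le {a b L : ℝ} (ha : 0 ≤ a) (hb : 0 ≤ b) (hL : 0 ≤ L)
    (hab : a ≤ b + L) (k : ℕ) : a ^ (k + 1) - b ^ (k + 1) ≤ (k + 1) * L * a ^ k := by
  rcases le_total a b with hle | hle
  · have := pow_le_pow_left₀ ha hle (k + 1)
    have : 0 ≤ (k + 1) * L * a ^ k := by positivity
    linarith
  · calc a ^ (k + 1) - b ^ (k + 1) ≤ |a ^ (k + 1) - b ^ (k + 1)| := le_abs_self _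
      _ ≤ |a - b| * (k + 1 : ℕ) * max |a| |b| ^ (k + 1 - 1) := abs_pow_sub_pow_le ..
      _ = (a - b) * (k + 1) * a ^ k := by
        rw [abs_of_nonneg (sub_nonneg.2 hle), abs_of_nonneg ha, abs_of_nonneg hb,
          max_eq_left hle]
        push_cast
        simp
      _ ≤ L * (k + 1) * a ^ k := by gcongr; linarith
      _ = (k + 1) * L * a ^ k := by ring

lemma mul_pow_mul_le_rpow_mul_pow_add_rpow {p q : ℝ} (hpq : p.HolderConjugate q) {k : ℕ}
    (hk : (k + 1 : ℝ) ≤ p * k) {v w b : ℝ} (hv : 0 ≤ v) (hw₀ : 0 ≤ w) (hw₁ : w ≤ 1)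
    (hb : 0 ≤ b) : v * w ^ k * b ≤ v ^ p * w ^ (k + 1) + b ^ q := by
  have hwk : w ^ k ≤ w ^ ((k + 1) / p) := by
    rw [← rpow_natCast]
    exact rpow_le_rpow_of_exponent_ge' hw₀ hw₁ (by positivity [hpq.pos])
      (by rw [div_le_iff₀ hpq.pos]; linarith)
  have hpow : (v * w ^ ((k + 1) / p)) ^ p = v ^ p * w ^ (k + 1) := by
    rw [mul_rpow hv (rpow_nonneg hw₀ _), ← rpow_mul hw₀, div_mul_cancel₀ _ hpq.ne_zero]
    norm_cast
  calc v * w ^ k * b ≤ v * w ^ ((k + 1) / p) * b := by gcongr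
    _ ≤ (v * w ^ ((k + 1) / p)) ^ p / p + b ^ q / q :=
      young_inequality_of_nonneg (by positivity) hb hpq
    _ ≤ (v * w ^ ((k + 1) / p)) ^ p + b ^ q :=
      add_le_add (div_le_self (by positivity) hpq.lt.le)
        (div_le_self (by positivity) hpq.symm.lt.le)
    _ = v ^ p * w ^ (k + 1) + b ^ q := by rw [hpow]

lemma tendsto_mul_rpow_mul_div_rpow_atTop {m q : ℝ} (hmq : m + 1 < q) {a B : ℝ} (ha : 0 ≤ a)
    (hB : 0 ≤ B) : Tendsto (fun R : ℝ => R * (a * R) ^ m * (B / R) ^ q) atTop (𝓝 0) := by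
  have hpow : ∀ᶠ R in atTop, a ^ m * B ^ q * R ^ (-(q - (m + 1))) =
      R * (a * R) ^ m * (B / R) ^ q := by
    filter_upwards [eventually_gt_atTop 0] with R hR
    rw [neg_sub, rpow_sub hR, rpow_add hR, rpow_one, mul_rpow ha hR.le, div_rpow hB hR.le]
    field_simp
  simpa using ((tendsto_rpow_neg_atTop (by linarith)).const_mul (a ^ m * B ^ q)).congr' hpow

lemma SimpleGraph.dist_fromRel_le_dist_add_one {V : Type*} {r : V → V → Prop} {x y : V}
    (h : r x y) (z : V) : (fromRel r).dist z y ≤ (fromRel r).dist z x + 1 := by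
  by_cases hxy : x = y
  · subst hxy; omega
  · have := ((fromRel_adj r x y).2 ⟨hxy, Or.inl h⟩).diff_dist_adj (u := z)
    omega

lemma holderConjugate_one_add_div {α : ℝ} (hα : 0 < α) : (1 + α).HolderConjugate ((1 + α) / α) :=
  (holderConjugate_iff_eq_conjExponent (by linarith)).2 (by rw [add_sub_cancel_left])

lemma natCeil_inv_add_one_le {α : ℝ} (hα : 0 < α) :
    ((⌈α⁻¹⌉₊ : ℕ) + 1 : ℝ) ≤ (1 + α) * ⌈α⁻¹⌉₊ := by
  have := mul_le_mul_of_nonneg_left (Nat.le_ceil α⁻¹) hα.le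
  rw [mul_inv_cancel₀ hα.ne'] at this
  linarith

section Cutoff

variable {V : Type*} (d : V → ℝ) (R : ℝ)

noncomputable def cutoff (x : V) : ℝ := max 0 (min 1 (2 - d x / R))

variable {d R}

lemma cutoff_nonneg (x : V) : 0 ≤ cutoff d R x := le_max_left _ _

lemma cutoff_le_one (x : V) : cutoff d R x ≤ 1 := max_le zero_le_one (min_le_left _ _)

lemma cutoff_eq_one (hR : 0 < R) {x : V} (hx : d x ≤ R) : cutoff d R x = 1 := by
  have : d x / R ≤ 1 := (div_le_one hR).2 hx
  rw [cutoff, min_eq_left (by linarith), max_eq_right zero_le_one]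

lemma lt_of_cutoff_ne_zero (hR : 0 < R) {x : V} (hx : cutoff d R x ≠ 0) : d x < 2 * R := by
  by_contra! h
  have : 2 - d x / R ≤ 0 := by rw [sub_nonpos, le_div_iff₀ hR]; linarith
  exact hx (max_eq_left ((min_le_right _ _).trans this))

lemma cutoff_le_cutoff_add_inv (hR : 0 < R) {x y : V} (h : d y ≤ d x + 1) :
    cutoff d R x ≤ cutoff d R y + R⁻¹ := by
  have hdiv : d y / R ≤ d x / R + R⁻¹ := by
    rw [inv_eq_one_div, ← add_div]
    exact div_le_div_of_nonneg_right h hR.le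
  have : 0 ≤ R⁻¹ := inv_nonneg.2 hR.le
  simp only [cutoff, max_def, min_def]
  split_ifs <;> linarith

end Cutoff

section WeightedGraph

variable {V : Type*} {ω : V → V → ℝ} {μ : V → ℝ}

lemma mul_graphLap_eq_sum {x : V} (hx : μ x ≠ 0) {S : Finset V} (hS : ∀ y ∉ S, ω x y = 0)
    (f : V → ℝ) : μ x * graphLap ω μ f x = ∑ y ∈ S, ω x y * (f y - f x) := by
  rw [graphLap, mul_div_cancel₀ _ hx, tsum_eq_sum fun y hy => by rw [hS y hy, zero_mul]]

lemma sum_mul_mul_graphLap_eq (hsymm : ∀ x y, ω x y = ω y x) (hμ : ∀ x, μ x ≠ 0)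
    {S : Finset V} {ψ : V → ℝ} (hψ : ∀ x ∈ S, ψ x ≠ 0 → ∀ y ∉ S, ω x y = 0) (f : V → ℝ) :
    ∑ x ∈ S, μ x * ψ x * graphLap ω μ f x = ∑ x ∈ S, f x * ∑ y ∈ S, ω x y * (ψ y - ψ x) := by
  have hloc : ∀ x ∈ S, μ x * ψ x * graphLap ω μ f x =
      ∑ y ∈ S, (ψ x * ω x y * f y - ψ x * ω x y * f x) := by
    intro x hx
    by_cases h : ψ x = 0
    · simp [h]
    · rw [mul_right_comm, mul_graphLap_eq_sum (hμ x) (hψ x hx h), Finset.sum_mul]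
      exact Finset.sum_congr rfl fun y _ => by ring
  have hswap : ∑ x ∈ S, ∑ y ∈ S, ψ x * ω x y * f y = ∑ x ∈ S, ∑ y ∈ S, ψ y * ω x y * f x := by
    rw [Finset.sum_comm]
    exact Finset.sum_congr rfl fun x _ => Finset.sum_congr rfl fun y _ => by rw [hsymm]
  rw [Finset.sum_congr rfl hloc]
  simp only [Finset.sum_sub_distrib]
  rw [hswap, ← Finset.sum_sub_distrib]
  refine Finset.sum_congr rfl fun x _ => ?_
  rw [← Finset.sum_sub_distrib, Finset.mul_sum]
  exact Finset.sum_congr rfl fun y _ => by ring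

lemma neg_le_sum_mul_pow_succ_sub (hwnn : ∀ x y, 0 ≤ ω x y) (hμ : ∀ x, 0 < μ x) {D : ℝ}
    (hD : ∀ x, (∑' y, ω x y) / μ x ≤ D) {η : V → ℝ} (hη : ∀ x, 0 ≤ η x) {L : ℝ} (hL : 0 ≤ L)
    (hηL : ∀ x y, 0 < ω x y → η x ≤ η y + L) {S : Finset V} {x : V}
    (hx : η x ≠ 0 → ∀ y ∉ S, ω x y = 0) (k : ℕ) :
    -((k + 1) * L * D * μ x * η x ^ k) ≤ ∑ y ∈ S, ω x y * (η y ^ (k + 1) - η x ^ (k + 1)) := by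
  by_cases h : η x = 0
  · have hD₀ : 0 ≤ D := (div_nonneg (tsum_nonneg (hwnn x)) (hμ x).le).trans (hD x)
    have hμx := (hμ x).le
    rw [h, zero_pow k.succ_ne_zero]
    calc -((k + 1) * L * D * μ x * 0 ^ k) ≤ 0 := neg_nonpos.2 (by positivity)
      _ ≤ ∑ y ∈ S, ω x y * (η y ^ (k + 1) - 0) :=
        Finset.sum_nonneg fun y _ => by rw [sub_zero]; exact mul_nonneg (hwnn x y) (pow_nonneg (hη y) _)
  · have hterm : ∀ y, ω x y * -((k + 1) * L * η x ^ k) ≤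
        ω x y * (η y ^ (k + 1) - η x ^ (k + 1)) := by
      intro y
      rcases (hwnn x y).eq_or_lt with h0 | hpos
      · simp [← h0]
      · have := pow_succ_sub_pow_succ_le (hη x) (hη y) hL (hηL x y hpos) k
        exact mul_le_mul_of_nonneg_left (by linarith) (hwnn x y)
    have hdeg : ∑' y, ω x y ≤ D * μ x := (div_le_iff₀ (hμ x)).1 (hD x)
    have hc : 0 ≤ (k + 1) * L * η x ^ k := by positivity [hη x]
    calc -((k + 1) * L * D * μ x * η x ^ k) = (D * μ x) * -((k + 1) * L * η x ^ k) := by ring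
      _ ≤ (∑' y, ω x y) * -((k + 1) * L * η x ^ k) := mul_le_mul_of_nonpos_right hdeg (by linarith)
      _ = ∑ y ∈ S, ω x y * -((k + 1) * L * η x ^ k) := by rw [tsum_eq_sum (hx h), Finset.sum_mul]
      _ ≤ _ := Finset.sum_le_sum fun y _ => hterm y

lemma neg_mul_sum_le_sum_mul_pow_succ_mul_graphLap (hsymm : ∀ x y, ω x y = ω y x)
    (hwnn : ∀ x y, 0 ≤ ω x y) (hμ : ∀ x, 0 < μ x) {D : ℝ}
    (hD : ∀ x, (∑' y, ω x y) / μ x ≤ D) {η : V → ℝ} (hη : ∀ x, 0 ≤ η x) {L : ℝ} (hL : 0 ≤ L)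
    (hηL : ∀ x y, 0 < ω x y → η x ≤ η y + L) {S : Finset V}
    (hsupp : ∀ x ∈ S, η x ≠ 0 → ∀ y ∉ S, ω x y = 0) (k : ℕ) {f : V → ℝ} (hf : ∀ x, 0 ≤ f x) :
    -((k + 1) * L * D) * ∑ x ∈ S, μ x * η x ^ k * f x ≤
      ∑ x ∈ S, μ x * η x ^ (k + 1) * graphLap ω μ f x := by
  rw [sum_mul_mul_graphLap_eq hsymm (fun x => (hμ x).ne')
    (fun x hx h => hsupp x hx fun h0 => h (by rw [h0, zero_pow k.succ_ne_zero])) f,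
    Finset.mul_sum]
  refine Finset.sum_le_sum fun x hx => ?_
  calc -((k + 1) * L * D) * (μ x * η x ^ k * f x) = f x * -((k + 1) * L * D * μ x * η x ^ k) := by
        ring
    _ ≤ _ := mul_le_mul_of_nonneg_left
        (neg_le_sum_mul_pow_succ_sub hwnn hμ hD hη hL hηL (hsupp x hx) k) (hf x)

lemma neg_le_sum_mul_energy_deriv (hsymm : ∀ x y, ω x y = ω y x) (hwnn : ∀ x y, 0 ≤ ω x y)
    (hμ : ∀ x, 0 < μ x) {D : ℝ} (hD : ∀ x, (∑' y, ω x y) / μ x ≤ D) {p q : ℝ}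
    (hpq : p.HolderConjugate q) {k : ℕ} (hk : (k + 1 : ℝ) ≤ p * k) {R : ℝ} (hR : 0 < R)
    {η : V → ℝ} (hη₀ : ∀ x, 0 ≤ η x) (hη₁ : ∀ x, η x ≤ 1)
    (hηL : ∀ x y, 0 < ω x y → η x ≤ η y + R⁻¹) {S : Finset V}
    (hsupp : ∀ x ∈ S, η x ≠ 0 → ∀ y ∉ S, ω x y = 0) {s : ℝ} (hs₀ : 0 ≤ s) (hs₁ : s ≤ 1)
    {f f' : V → ℝ} (hf : ∀ x, 0 ≤ f x) (hf' : ∀ x, f' x = graphLap ω μ f x + f x ^ p) :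
    -((∑ x ∈ S, μ x) * ((k + 1) * (D + 1) / R) ^ q) ≤
      ∑ x ∈ S, μ x * (f' x * (s * η x) ^ (k + 1) -
        f x * ((k + 1) * (s * η x) ^ k * (η x / R))) := by
  set b := (k + 1) * (D + 1) / R
  have hGreen := neg_mul_sum_le_sum_mul_pow_succ_mul_graphLap hsymm hwnn hμ hD hη₀
    (inv_nonneg.2 hR.le) hηL hsupp k hf
  have hpt : ∀ x ∈ S, μ x * -(b ^ q) ≤ μ x * (f x ^ p * (s * η x) ^ (k + 1) -
      f x * (s * η x) ^ k * ((k + 1) * (D * s + η x) / R)) := by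
    intro x _
    have hD₀ : 0 ≤ D := (div_nonneg (tsum_nonneg (hwnn x)) (hμ x).le).trans (hD x)
    have hw₀ : 0 ≤ s * η x := mul_nonneg hs₀ (hη₀ x)
    have hw₁ : s * η x ≤ 1 := mul_le_one₀ hs₁ (hη₀ x) (hη₁ x)
    have hyoung := mul_pow_mul_le_rpow_mul_pow_add_rpow hpq hk (hf x) hw₀ hw₁
      (b := b) (by positivity)
    have hb : f x * (s * η x) ^ k * ((k + 1) * (D * s + η x) / R) ≤ f x * (s * η x) ^ k * b := by
      have : D * s + η x ≤ D + 1 := by nlinarith [hη₁ x]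
      have : 0 ≤ f x * (s * η x) ^ k := mul_nonneg (hf x) (pow_nonneg hw₀ k)
      dsimp only [b]
      gcongr
    exact mul_le_mul_of_nonneg_left (by linarith) (hμ x).le
  calc -((∑ x ∈ S, μ x) * b ^ q) = ∑ x ∈ S, μ x * -(b ^ q) := by
        simp only [mul_neg, Finset.sum_mul, Finset.sum_neg_distrib]
    _ ≤ ∑ x ∈ S, μ x * (f x ^ p * (s * η x) ^ (k + 1) -
          f x * (s * η x) ^ k * ((k + 1) * (D * s + η x) / R)) := Finset.sum_le_sum hpt
    _ = s ^ (k + 1) * (-((k + 1) * R⁻¹ * D) * ∑ x ∈ S, μ x * η x ^ k * f x) +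
          ∑ x ∈ S, μ x * (f x ^ p * (s * η x) ^ (k + 1) -
            f x * ((k + 1) * (s * η x) ^ k * (η x / R))) := by
        rw [Finset.mul_sum, Finset.mul_sum, ← Finset.sum_add_distrib]
        exact Finset.sum_congr rfl fun x _ => by ring
    _ ≤ s ^ (k + 1) * ∑ x ∈ S, μ x * η x ^ (k + 1) * graphLap ω μ f x +
          ∑ x ∈ S, μ x * (f x ^ p * (s * η x) ^ (k + 1) -
            f x * ((k + 1) * (s * η x) ^ k * (η x / R))) := by gcongr
    _ = _ := by
        simp only [hf']
        rw [Finset.mul_sum, ← Finset.sum_add_distrib]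
        exact Finset.sum_congr rfl fun x _ => by ring

lemma sum_mul_mul_pow_succ_le_of_solution (hsymm : ∀ x y, ω x y = ω y x)
    (hwnn : ∀ x y, 0 ≤ ω x y) (hμ : ∀ x, 0 < μ x) {D : ℝ}
    (hD : ∀ x, (∑' y, ω x y) / μ x ≤ D) {p q : ℝ} (hpq : p.HolderConjugate q) {k : ℕ}
    (hk : (k + 1 : ℝ) ≤ p * k) {R : ℝ} (hR : 0 < R) {η : V → ℝ} (hη₀ : ∀ x, 0 ≤ η x)
    (hη₁ : ∀ x, η x ≤ 1) (hηL : ∀ x y, 0 < ω x y → η x ≤ η y + R⁻¹) {S : Finset V}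
    (hsupp : ∀ x ∈ S, η x ≠ 0 → ∀ y ∉ S, ω x y = 0) {u u' : ℝ → V → ℝ}
    (hcont : ∀ x, ContinuousOn (fun t => u t x) (Icc 0 R))
    (hderiv : ∀ x, ∀ t ∈ Ioo 0 R, HasDerivAt (fun s => u s x) (u' t x) t)
    (heqn : ∀ t ∈ Ioo 0 R, ∀ x, u' t x = graphLap ω μ (u t) x + u t x ^ p)
    (hnn : ∀ t ∈ Icc 0 R, ∀ x, 0 ≤ u t x) :
    ∑ x ∈ S, μ x * u 0 x * η x ^ (k + 1) ≤
      R * ((∑ x ∈ S, μ x) * ((k + 1) * (D + 1) / R) ^ q) := by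
  set E : ℝ → ℝ := fun t => ∑ x ∈ S, μ x * (u t x * ((1 - t / R) * η x) ^ (k + 1))
  have hE : ∀ t ∈ Ioo 0 R, HasDerivAt E (∑ x ∈ S, μ x * (u' t x * ((1 - t / R) * η x) ^ (k + 1)
      - u t x * ((k + 1) * ((1 - t / R) * η x) ^ k * (η x / R)))) t := by
    intro t ht
    refine HasDerivAt.fun_sum fun x _ => ?_
    have hφ : HasDerivAt (fun t => ((1 - t / R) * η x) ^ (k + 1))
        (-((k + 1) * ((1 - t / R) * η x) ^ k * (η x / R))) t := by
      refine ((((hasDerivAt_id' t).div_const R).const_sub 1).mul_const (η x)).fun_pow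
        (k + 1) |>.congr_deriv ?_
      push_cast
      ring
    exact ((hderiv x t ht).mul hφ).const_mul (μ x) |>.congr_deriv (by ring)
  have hEcont : ContinuousOn E (Icc 0 R) :=
    continuousOn_finsetSum _ fun x _ => continuousOn_const.mul ((hcont x).mul (by fun_prop))
  have hgrowth := (convex_Icc 0 R).mul_sub_le_image_sub_of_le_deriv hEcont
    (by
      rw [interior_Icc]
      exact fun t ht => (hE t ht).differentiableAt.differentiableWithinAt)
    (by
      rw [interior_Icc]
      intro t ht
      rw [(hE t ht).deriv]
      have hs₀ : 0 ≤ 1 - t / R := by rw [sub_nonneg, div_le_one hR]; exact ht.2.le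
      have hs₁ : 1 - t / R ≤ 1 := by linarith [div_pos ht.1 hR]
      exact neg_le_sum_mul_energy_deriv hsymm hwnn hμ hD hpq hk hR hη₀ hη₁ hηL hsupp hs₀ hs₁
        (hnn t (Ioo_subset_Icc_self ht)) (heqn t ht))
    0 ⟨le_rfl, hR.le⟩ R ⟨hR.le, le_rfl⟩ hR.le
  have hER : E R = 0 := by simp [E, hR.ne']
  have hE0 : E 0 = ∑ x ∈ S, μ x * u 0 x * η x ^ (k + 1) := by simp [E, mul_assoc]
  rw [hER, hE0] at hgrowth
  linarith

lemma mul_initial_le_of_solution (hsymm : ∀ x y, ω x y = ω y x) (hwnn : ∀ x y, 0 ≤ ω x y)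
    (hμ : ∀ x, 0 < μ x) {D : ℝ} (hD : ∀ x, (∑' y, ω x y) / μ x ≤ D) {p q : ℝ}
    (hpq : p.HolderConjugate q) {k : ℕ} (hk : (k + 1 : ℝ) ≤ p * k) {R : ℝ} (hR : 1 ≤ R)
    (x₀ : V) {S : Finset V}
    (hS : ∀ y, y ∈ S ↔ ((SimpleGraph.fromRel fun a b => 0 < ω a b).dist x₀ y : ℝ) ≤ 3 * R)
    {u u' : ℝ → V → ℝ} (hcont : ∀ x, ContinuousOn (fun t => u t x) (Icc 0 R))
    (hderiv : ∀ x, ∀ t ∈ Ioo 0 R, HasDerivAt (fun s => u s x) (u' t x) t)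
    (heqn : ∀ t ∈ Ioo 0 R, ∀ x, u' t x = graphLap ω μ (u t) x + u t x ^ p)
    (hnn : ∀ t ∈ Icc 0 R, ∀ x, 0 ≤ u t x) :
    μ x₀ * u 0 x₀ ≤ R * ((∑ x ∈ S, μ x) * ((k + 1) * (D + 1) / R) ^ q) := by
  -- `S` has radius `3R ≥ 2R + 1` so that it contains every neighbour of the support of the cutoff.
  set d : V → ℝ := fun x => ((SimpleGraph.fromRel fun a b => 0 < ω a b).dist x₀ x : ℝ)
  have hd : ∀ x y, 0 < ω x y → d y ≤ d x + 1 := fun x y h => by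
    dsimp only [d]
    exact_mod_cast SimpleGraph.dist_fromRel_le_dist_add_one (r := fun a b => 0 < ω a b) h x₀
  have hd₀ : d x₀ = 0 := by simp [d]
  have hR₀ : 0 < R := by linarith
  have hsupp : ∀ x ∈ S, cutoff d R x ≠ 0 → ∀ y ∉ S, ω x y = 0 := by
    intro x _ hx y hy
    refine le_antisymm (not_lt.1 fun hxy => hy ((hS y).2 ?_)) (hwnn x y)
    linarith [hd x y hxy, lt_of_cutoff_ne_zero hR₀ hx]
  have hu₀ : ∀ x, 0 ≤ u 0 x := hnn 0 ⟨le_rfl, hR₀.le⟩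
  calc μ x₀ * u 0 x₀ = μ x₀ * u 0 x₀ * cutoff d R x₀ ^ (k + 1) := by
        rw [cutoff_eq_one hR₀ (by linarith), one_pow, mul_one]
    _ ≤ ∑ x ∈ S, μ x * u 0 x * cutoff d R x ^ (k + 1) :=
        Finset.single_le_sum (f := fun x => μ x * u 0 x * cutoff d R x ^ (k + 1))
          (fun x _ => mul_nonneg (mul_nonneg (hμ x).le (hu₀ x)) (pow_nonneg (cutoff_nonneg x) _))
          ((hS x₀).2 (by linarith))
    _ ≤ _ := sum_mul_mul_pow_succ_le_of_solution hsymm hwnn hμ hD hpq hk hR₀ cutoff_nonneg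
        cutoff_le_one (fun x y h => cutoff_le_cutoff_add_inv hR₀ (hd x y h)) hsupp hcont hderiv
        heqn hnn

end WeightedGraph

theorem blowup_semilinear_heat_general
    {V : Type*} (ω : V → V → ℝ) (μ : V → ℝ)
    (hsymm : ∀ x y, ω x y = ω y x)
    (hwnn : ∀ x y, 0 ≤ ω x y)
    (hμpos : ∀ x, 0 < μ x)
    (Dμ : ℝ) (hDμ : ∀ x, (∑' y, ω x y) / μ x ≤ Dμ)
    -- volume growth of positive degree `m`
    (m : ℝ) (c₀ : ℝ)
    (hvol : ∀ (x : V) (r : ℝ), 1 ≤ r →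
      ∃ hfin : {y | ((SimpleGraph.fromRel fun a b => 0 < ω a b).dist x y : ℝ) ≤ r}.Finite,
        ∑ y ∈ hfin.toFinset, μ y ≤ c₀ * r ^ m)
    (α : ℝ) (hα : 0 < α) (hmα₁ : m * α < 1)
    -- the initial datum
    (a : V → ℝ)
    (ha_nonneg : ∀ x, 0 ≤ a x)
    (ha_nontriv : ∃ x, a x ≠ 0) :
    ¬ ∃ (u u' : ℝ → V → ℝ),
        (∀ x, ContinuousOn (fun t => u t x) (Ici (0:ℝ))) ∧
        (∀ x, ∀ t > (0:ℝ), HasDerivAt (fun s => u s x) (u' t x) t) ∧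
        (∀ t > (0:ℝ), ∀ x, u' t x = graphLap ω μ (u t) x + u t x ^ (1 + α)) ∧
        (∀ x, u 0 x = a x) ∧
        (∀ T > (0:ℝ), ∃ C, ∀ t ∈ Icc (0:ℝ) T, ∀ x, |u t x| ≤ C) ∧
        (∀ t ≥ (0:ℝ), ∀ x, 0 ≤ u t x) := by
  rintro ⟨u, u', hcont, hderiv, heqn, hinit, -, hnn⟩
  obtain ⟨x₀, hx₀⟩ := ha_nontriv
  have hε : 0 < μ x₀ * a x₀ := mul_pos (hμpos x₀) ((ha_nonneg x₀).lt_of_ne' hx₀)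
  have hDμ₀ : 0 ≤ Dμ := (div_nonneg (tsum_nonneg (hwnn x₀)) (hμpos x₀).le).trans (hDμ x₀)
  set k := ⌈α⁻¹⌉₊
  have hmq : m + 1 < (1 + α) / α := by rw [lt_div_iff₀ hα]; linarith
  obtain ⟨R, hRε, hR⟩ := ((((tendsto_mul_rpow_mul_div_rpow_atTop hmq (a := 3)
    (B := (k + 1) * (Dμ + 1)) (by norm_num) (by positivity)).const_mul c₀).eventually_lt_const
    (by rwa [mul_zero])).and (eventually_ge_atTop 1)).exists
  obtain ⟨hfin, hvolS⟩ := hvol x₀ (3 * R) (by linarith)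
  have hbound := mul_initial_le_of_solution hsymm hwnn hμpos hDμ (holderConjugate_one_add_div hα)
    (natCeil_inv_add_one_le hα) hR x₀ (fun y => hfin.mem_toFinset)
    (fun x => (hcont x).mono Icc_subset_Ici_self) (fun x t ht => hderiv x t ht.1)
    (fun t ht => heqn t ht.1) (fun t ht => hnn t ht.1)
  rw [hinit] at hbound
  have hR₀ : 0 ≤ R := by linarith
  refine lt_irrefl (μ x₀ * a x₀) ?_
  calc μ x₀ * a x₀
      ≤ R * ((∑ y ∈ hfin.toFinset, μ y) * ((k + 1) * (Dμ + 1) / R) ^ ((1 + α) / α)) := hbound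
    _ ≤ R * (c₀ * (3 * R) ^ m * ((k + 1) * (Dμ + 1) / R) ^ ((1 + α) / α)) := by gcongr
    _ = c₀ * (R * (3 * R) ^ m * ((k + 1) * (Dμ + 1) / R) ^ ((1 + α) / α)) := by ring
    _ < μ x₀ * a x₀ := hRε

/-- Blow-up for the semilinear heat equation `∂ₜu = Δu + u^{1+α}` on a locally finite
connected weighted graph with volume growth of positive degree `m`: if `0 < mα < 1`,
then for every bounded, nonnegative, nontrivial initial value `a` there is no
nonnegative global solution. -/
theorem blowup_semilinear_heat
    {V : Type*} [Countable V] (ω : V → V → ℝ) (μ : V → ℝ)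
    (hsymm : ∀ x y, ω x y = ω y x)
    (hwnn : ∀ x y, 0 ≤ ω x y)
    (hμpos : ∀ x, 0 < μ x)
    (hlocfin : ∀ x, {y | 0 < ω x y}.Finite)
    (hdeg : ∀ x, ∃ y, 0 < ω x y)
    (hconn : ∀ x y, Relation.ReflTransGen (fun a b => 0 < ω a b) x y)
    (Dμ : ℝ) (hDμ : ∀ x, (∑' y, ω x y) / μ x ≤ Dμ)
    -- volume growth of positive degree `m`
    (m : ℝ) (hm : 0 < m) (c₀ : ℝ) (hc₀ : 0 < c₀)
    (hvol : ∀ (x : V) (r : ℝ), 1 ≤ r →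
      ∃ hfin : {y | ((SimpleGraph.fromRel fun a b => 0 < ω a b).dist x y : ℝ) ≤ r}.Finite,
        ∑ y ∈ hfin.toFinset, μ y ≤ c₀ * r ^ m)
    (α : ℝ) (hα : 0 < α) (hmα₀ : 0 < m * α) (hmα₁ : m * α < 1)
    -- the initial datum
    (a : V → ℝ)
    (ha_bdd : ∃ A, ∀ x, |a x| ≤ A)
    (ha_nonneg : ∀ x, 0 ≤ a x)
    (ha_nontriv : ∃ x, a x ≠ 0) :
    ¬ ∃ (u u' : ℝ → V → ℝ),
        (∀ x, ContinuousOn (fun t => u t x) (Ici (0:ℝ))) ∧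
        (∀ x, ∀ t > (0:ℝ), HasDerivAt (fun s => u s x) (u' t x) t) ∧
        (∀ t > (0:ℝ), ∀ x, u' t x = graphLap ω μ (u t) x + u t x ^ (1 + α)) ∧
        (∀ x, u 0 x = a x) ∧
        (∀ T > (0:ℝ), ∃ C, ∀ t ∈ Icc (0:ℝ) T, ∀ x, |u t x| ≤ C) ∧
        (∀ t ≥ (0:ℝ), ∀ x, 0 ≤ u t x) :=
  blowup_semilinear_heat_general ω μ hsymm hwnn hμpos Dμ hDμ m c₀ hvol α hα hmα₁ a ha_nonneg
    ha_nontriv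
end

section
/- Let G = (V, ω, μ) be a locally finite connected weighted graph with D_μ < ∞. Let h : V → ℝ be nonnegative with ∑_{y∈V} μ(y) h(y) < ∞, and let g : V → ℝ be bounded. Then the sums ∑_{y∈V} μ(y) (Δh)(y) g(y) and ∑_{y∈V} μ(y) h(y) (Δg)(y) both converge absolutely and are equal. -/
/-!
Multiplying by `μ` clears the denominator of the Laplacian, so both sides are iterated sums
`∑ₓ ∑ᵧ ω(x,y) (h(y) - h(x)) g(x)` and `∑ₓ ∑ᵧ ω(x,y) (g(y) - g(x)) h(x)`. The degree bound and
`∑ μ h < ∞` make `ω(x,y) h(x)` summable on `V × V`, hence (by symmetry of `ω`) also `ω(x,y) h(y)`;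
as `g` is bounded, every term `ω h g` that occurs is summable on `V × V`. The iterated sums are then
unconditional double sums, and exchanging `x` and `y` in `∑ ω(x,y) h(y) g(x)` turns one side into
the other.
-/

open Set

section

variable {α V : Type*}

lemma Summable.mul_of_abs_le {f c : α → ℝ} {A : ℝ} (hf : Summable f) (hf₀ : ∀ a, 0 ≤ f a)
    (hc : ∀ a, |c a| ≤ A) : Summable fun a => f a * c a :=
  (hf.mul_left A).of_norm_bounded fun a => by
    rw [Real.norm_eq_abs, abs_mul, abs_of_nonneg (hf₀ a), mul_comm]
    exact mul_le_mul_of_nonneg_right (hc a) (hf₀ a)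

lemma summable_prod_weight_mul_left {ω : V → V → ℝ} {μ h : V → ℝ} {D : ℝ}
    (hω : ∀ x y, 0 ≤ ω x y) (hrow : ∀ x, Summable (ω x))
    (hdeg : ∀ x, ∑' y, ω x y ≤ D * μ x) (hh : ∀ x, 0 ≤ h x)
    (hμh : Summable fun x => μ x * h x) :
    Summable fun p : V × V => ω p.1 p.2 * h p.1 := by
  have hnn : 0 ≤ fun p : V × V => ω p.1 p.2 * h p.1 := fun p => mul_nonneg (hω _ _) (hh _)
  refine (summable_prod_of_nonneg hnn).mpr ⟨fun x => (hrow x).mul_right (h x), ?_⟩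
  refine (hμh.mul_left D).of_nonneg_of_le (fun x => tsum_nonneg fun y => hnn (x, y)) fun x => ?_
  calc ∑' y, ω x y * h x = (∑' y, ω x y) * h x := tsum_mul_right
    _ ≤ D * μ x * h x := mul_le_mul_of_nonneg_right (hdeg x) (hh x)
    _ = D * (μ x * h x) := mul_assoc _ _ _

lemma tsum_tsum_weight_sub_mul_eq {ω : V → V → ℝ} (hsymm : ∀ x y, ω x y = ω y x) {h g : V → ℝ}
    (hP : Summable fun p : V × V => ω p.1 p.2 * h p.2 * g p.1)
    (hQ : Summable fun p : V × V => ω p.1 p.2 * h p.1 * g p.1) :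
    ∑' x, ∑' y, ω x y * (h y - h x) * g x = ∑' x, ∑' y, ω x y * (g y - g x) * h x := by
  have hswap : ∀ p : V × V, ω p.2 p.1 * h p.1 * g p.2 = ω p.1 p.2 * h p.1 * g p.2 := fun p => by
    rw [hsymm]
  have hR : Summable fun p : V × V => ω p.1 p.2 * h p.1 * g p.2 := by
    simpa only [Prod.fst_swap, Prod.snd_swap, hswap] using hP.prod_symm
  have hPR : ∑' p : V × V, ω p.1 p.2 * h p.2 * g p.1 = ∑' p : V × V, ω p.1 p.2 * h p.1 * g p.2 := by
    simp only [← (Equiv.prodComm V V).tsum_eq fun p => ω p.1 p.2 * h p.2 * g p.1,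
      Equiv.prodComm_apply, Prod.fst_swap, Prod.snd_swap, hswap]
  calc ∑' x, ∑' y, ω x y * (h y - h x) * g x
      = ∑' p : V × V, (ω p.1 p.2 * h p.2 * g p.1 - ω p.1 p.2 * h p.1 * g p.1) := by
        rw [(hP.sub hQ).tsum_prod]; simp only [mul_sub, sub_mul]
    _ = ∑' p : V × V, (ω p.1 p.2 * h p.1 * g p.2 - ω p.1 p.2 * h p.1 * g p.1) := by
        rw [hP.tsum_sub hQ, hR.tsum_sub hQ, hPR]
    _ = ∑' x, ∑' y, ω x y * (g y - g x) * h x := by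
        rw [(hR.sub hQ).tsum_prod]; exact tsum_congr fun x => tsum_congr fun y => by ring

lemma mul_graphLap_mul {ω : V → V → ℝ} {μ : V → ℝ} {x : V} (hμ : μ x ≠ 0) (h g : V → ℝ) :
    μ x * graphLap ω μ h x * g x = ∑' y, ω x y * (h y - h x) * g x := by
  rw [graphLap, mul_div_cancel₀ _ hμ, tsum_mul_right]

lemma mul_mul_graphLap {ω : V → V → ℝ} {μ : V → ℝ} {x : V} (hμ : μ x ≠ 0) (h g : V → ℝ) :
    μ x * h x * graphLap ω μ g x = ∑' y, ω x y * (g y - g x) * h x := by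
  rw [mul_right_comm, graphLap, mul_div_cancel₀ _ hμ, tsum_mul_right]

end

theorem graphLap_selfadjoint_general
    {V : Type*} (ω : V → V → ℝ) (μ : V → ℝ)
    (hsymm : ∀ x y, ω x y = ω y x)
    (hwnn : ∀ x y, 0 ≤ ω x y)
    (hμpos : ∀ x, 0 < μ x)
    (hlocfin : ∀ x, {y | 0 < ω x y}.Finite)
    (Dμ : ℝ) (hDμ : ∀ x, (∑' y, ω x y) / μ x ≤ Dμ)
    (h g : V → ℝ)
    (hh_nonneg : ∀ x, 0 ≤ h x)
    (hh_sum : Summable fun y => μ y * h y)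
    (A : ℝ) (hg : ∀ x, |g x| ≤ A) :
    Summable (fun y => |μ y * graphLap ω μ h y * g y|) ∧
    Summable (fun y => |μ y * h y * graphLap ω μ g y|) ∧
    ∑' y, μ y * graphLap ω μ h y * g y = ∑' y, μ y * h y * graphLap ω μ g y := by
  have hrow : ∀ x, Summable (ω x) := fun x =>
    summable_of_hasFiniteSupport <| (hlocfin x).subset fun y hy => (hwnn x y).lt_of_ne' hy
  have hdeg : ∀ x, ∑' y, ω x y ≤ Dμ * μ x := fun x => (div_le_iff₀ (hμpos x)).mp (hDμ x)
  have hS₁ := summable_prod_weight_mul_left hwnn hrow hdeg hh_nonneg hh_sum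
  have hS₂ : Summable fun p : V × V => ω p.1 p.2 * h p.2 := by
    simpa only [Prod.fst_swap, Prod.snd_swap, hsymm _ (Prod.fst _)] using hS₁.prod_symm
  have hP := hS₂.mul_of_abs_le (fun p => mul_nonneg (hwnn _ _) (hh_nonneg _)) fun p => hg p.1
  have hQ := hS₁.mul_of_abs_le (fun p => mul_nonneg (hwnn _ _) (hh_nonneg _)) fun p => hg p.1
  have hR := hS₁.mul_of_abs_le (fun p => mul_nonneg (hwnn _ _) (hh_nonneg _)) fun p => hg p.2
  have hF : Summable fun p : V × V => ω p.1 p.2 * (h p.2 - h p.1) * g p.1 := by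
    simpa only [mul_sub, sub_mul] using hP.sub hQ
  have hG : Summable fun p : V × V => ω p.1 p.2 * (g p.2 - g p.1) * h p.1 := by
    exact (hR.sub hQ).congr fun p => by ring
  have hΔh := fun x => mul_graphLap_mul (ω := ω) (hμpos x).ne' h g
  have hΔg := fun x => mul_mul_graphLap (ω := ω) (hμpos x).ne' h g
  simp only [hΔh, hΔg]
  exact ⟨summable_abs_iff.mpr hF.prod, summable_abs_iff.mpr hG.prod,
    tsum_tsum_weight_sub_mul_eq hsymm hP hQ⟩

/-- Green's formula: for `h ≥ 0` with `∑_y μ(y) h(y) < ∞` and `g` bounded,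
the sums `∑_y μ(y) Δh(y) g(y)` and `∑_y μ(y) h(y) Δg(y)` converge absolutely and agree. -/
theorem graphLap_selfadjoint
    {V : Type*} [Countable V] (ω : V → V → ℝ) (μ : V → ℝ)
    (hsymm : ∀ x y, ω x y = ω y x)
    (hwnn : ∀ x y, 0 ≤ ω x y)
    (hμpos : ∀ x, 0 < μ x)
    (hlocfin : ∀ x, {y | 0 < ω x y}.Finite)
    (hdeg : ∀ x, ∃ y, 0 < ω x y)
    (hconn : ∀ x y, Relation.ReflTransGen (fun a b => 0 < ω a b) x y)
    (Dμ : ℝ) (hDμ : ∀ x, (∑' y, ω x y) / μ x ≤ Dμ)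
    (h g : V → ℝ)
    (hh_nonneg : ∀ x, 0 ≤ h x)
    (hh_sum : Summable fun y => μ y * h y)
    (A : ℝ) (hg : ∀ x, |g x| ≤ A) :
    Summable (fun y => |μ y * graphLap ω μ h y * g y|) ∧
    Summable (fun y => |μ y * h y * graphLap ω μ g y|) ∧
    ∑' y, μ y * graphLap ω μ h y * g y = ∑' y, μ y * h y * graphLap ω μ g y :=
  graphLap_selfadjoint_general ω μ hsymm hwnn hμpos hlocfin Dμ hDμ h g hh_nonneg hh_sum A hg
end

section
/- (Strong Maximum Principle.) Let G = (V, ω, μ) be a locally finite connected weighted graph with D_μ < ∞, Ω ⊆ V a finite subset with nonempty interior Ω°, and T > 0. Suppose v : [0,T) × Ω → ℝ is bounded, continuous in t on [0,T) and differentiable in t on (0,T), k : [0,T) × Ω° → ℝ is bounded, and: (i) ∂_t v(t,x) − Δ_Ω v(t,x) − k(t,x) v(t,x) ≥ 0 for all (t,x) ∈ (0,T) × Ω°; (ii) v(0,x) ≥ 0 for all x ∈ Ω°; (iii) v(t,x) ≥ 0 for all (t,x) ∈ [0,T) × ∂Ω. Then v(t,x) ≥ 0 for all (t,x) ∈ [0,T)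 × Ω. -/
open Set

open Classical in
/-- The boundary `∂Ω = {x ∈ Ω : ∃ y ∉ Ω, y ~ x}` of a finite subset of a weighted graph. -/
noncomputable def graphBoundary {V : Type*} (ω : V → V → ℝ) (Ω : Finset V) : Finset V :=
  Ω.filter fun x => ∃ y ∉ Ω, 0 < ω x y

open Classical in
/-- The interior `Ω° = Ω \ ∂Ω` of a finite subset of a weighted graph: the points of `Ω`
all of whose neighbours lie in `Ω`. -/
noncomputable def graphInterior {V : Type*} (ω : V → V → ℝ) (Ω : Finset V) : Finset V :=
  Ω.filter fun x => ∀ y, 0 < ω x y → y ∈ Ω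

/-!
Fix `t`, let `C` bound `k`, and minimise `u(s, y) = e^{-(C+1)s} v(s, y)` over `[0, t] × Ω`.
If the minimum were negative, the boundary and initial conditions would place it at an interior
point `x₀` at a positive time `t₀`. There `Δ_Ω v ≥ 0`, and comparing with earlier times gives
`∂ₜv ≤ (C+1) v`, so `∂ₜv − Δ_Ω v − k v ≤ (C+1−k) v < 0`, contradicting the differential inequality.
-/

section GraphLaplacian

variable {V : Type*} {ω : V → V → ℝ} {Ω : Finset V} {x y : V}

theorem mem_of_mem_graphInterior (hx : x ∈ graphInterior ω Ω) (hxy : 0 < ω x y) : y ∈ Ω := by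
  classical
  rw [graphInterior, Finset.mem_filter] at hx
  exact hx.2 y hxy

theorem mem_graphInterior_or_mem_graphBoundary (hx : x ∈ Ω) :
    x ∈ graphInterior ω Ω ∨ x ∈ graphBoundary ω Ω := by
  classical
  simp only [graphInterior, graphBoundary, Finset.mem_filter, hx, true_and]
  by_contra! h
  obtain ⟨y, hxy, hyΩ⟩ := h.1
  exact (h.2 y hyΩ).not_gt hxy

theorem graphLap_nonneg_of_le_neighbours {μ : V → ℝ} {h : V → ℝ} (hω : ∀ y, 0 ≤ ω x y)
    (hμ : 0 ≤ μ x) (hmin : ∀ y, 0 < ω x y → h x ≤ h y) : 0 ≤ graphLap ω μ h x := by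
  refine div_nonneg (tsum_nonneg fun y => ?_) hμ
  rcases (hω y).eq_or_lt with hxy | hxy
  · simp [← hxy]
  · exact mul_nonneg hxy.le (sub_nonneg.2 (hmin y hxy))

end GraphLaplacian

theorem exists_forall_le_of_continuousOn {α ι : Type*} [TopologicalSpace α] {K : Set α}
    (hK : IsCompact K) (hKne : K.Nonempty) {s : Finset ι} (hs : s.Nonempty) {f : α → ι → ℝ}
    (hf : ∀ i ∈ s, ContinuousOn (f · i) K) :
    ∃ a ∈ K, ∃ i ∈ s, ∀ b ∈ K, ∀ j ∈ s, f a i ≤ f b j := by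
  obtain ⟨a, ha, hmin⟩ :=
    hK.exists_isMinOn hKne (ContinuousOn.finset_inf'_apply (f := fun i a => f a i) hs hf)
  obtain ⟨i, hi, hai⟩ := Finset.exists_mem_eq_inf' hs (f a)
  refine ⟨a, ha, i, hi, fun b hb j hj => ?_⟩
  rw [← hai]
  exact (hmin hb).trans (Finset.inf'_le _ hj)

theorem HasDerivAt.nonpos_of_forall_le_left {f : ℝ → ℝ} {f' a : ℝ} (hf : HasDerivAt f f' a)
    (hmin : ∀ᶠ s in nhdsWithin a (Iio a), f a ≤ f s) : f' ≤ 0 := by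
  have hslope : Filter.Tendsto (slope f a) (nhdsWithin a (Iio a)) (nhds f') :=
    (hasDerivAt_iff_tendsto_slope.mp hf).mono_left (nhdsWithin_mono _ fun s hs => ne_of_lt hs)
  refine le_of_tendsto hslope ?_
  filter_upwards [hmin, self_mem_nhdsWithin] with s hs hsa
  rw [slope_def_field]
  exact div_nonpos_of_nonneg_of_nonpos (sub_nonneg.2 hs) (sub_nonpos.2 (le_of_lt hsa))

theorem HasDerivAt.le_mul_of_exp_mul_le_left {f : ℝ → ℝ} {f' a c : ℝ} (hf : HasDerivAt f f' a)
    (hmin : ∀ᶠ s in nhdsWithin a (Iio a),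
      Real.exp (-(c * a)) * f a ≤ Real.exp (-(c * s)) * f s) :
    f' ≤ c * f a := by
  have hexp : HasDerivAt (fun s => Real.exp (-(c * s))) (Real.exp (-(c * a)) * -c) a := by
    simpa using ((hasDerivAt_id a).const_mul c).neg.exp
  have hneg := (hexp.mul hf).nonpos_of_forall_le_left hmin
  nlinarith [Real.exp_pos (-(c * a))]

theorem strong_maximum_principle_general
    {V : Type*} (ω : V → V → ℝ) (μ : V → ℝ)
    (hwnn : ∀ x y, 0 ≤ ω x y)
    (hμpos : ∀ x, 0 < μ x)
    (Ω : Finset V) (hΩne : Ω.Nonempty)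
    (T : ℝ)
    (v v' : ℝ → V → ℝ) (k : ℝ → V → ℝ)
    (hv_cont : ∀ x ∈ Ω, ContinuousOn (fun t => v t x) (Ico (0:ℝ) T))
    (hv_deriv : ∀ x ∈ Ω, ∀ t ∈ Ioo (0:ℝ) T, HasDerivAt (fun s => v s x) (v' t x) t)
    (hk_bdd : ∃ C, ∀ t ∈ Ico (0:ℝ) T, ∀ x ∈ graphInterior ω Ω, |k t x| ≤ C)
    (hineq : ∀ t ∈ Ioo (0:ℝ) T, ∀ x ∈ graphInterior ω Ω,
      0 ≤ v' t x - graphLap ω μ (v t) x - k t x * v t x)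
    (hinit : ∀ x ∈ graphInterior ω Ω, 0 ≤ v 0 x)
    (hbdry : ∀ t ∈ Ico (0:ℝ) T, ∀ x ∈ graphBoundary ω Ω, 0 ≤ v t x) :
    ∀ t ∈ Ico (0:ℝ) T, ∀ x ∈ Ω, 0 ≤ v t x := by
  obtain ⟨C, hC⟩ := hk_bdd
  intro t ht x hx
  have hsub : Icc 0 t ⊆ Ico 0 T := fun s hs => ⟨hs.1, hs.2.trans_lt ht.2⟩
  set u : ℝ → V → ℝ := fun s y => Real.exp (-((C + 1) * s)) * v s y
  obtain ⟨t₀, ht₀, x₀, hx₀, hmin⟩ := exists_forall_le_of_continuousOn (f := u) isCompact_Icc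
    ⟨0, left_mem_Icc.2 ht.1⟩ hΩne fun y hy =>
      (Real.continuous_exp.comp_continuousOn (by fun_prop)).mul ((hv_cont y hy).mono hsub)
  suffices 0 ≤ v t₀ x₀ from nonneg_of_mul_nonneg_right
    ((mul_nonneg (Real.exp_pos _).le this).trans (hmin t ⟨ht.1, le_rfl⟩ x hx)) (Real.exp_pos _)
  by_contra! hneg
  have hv_min : ∀ y ∈ Ω, v t₀ x₀ ≤ v t₀ y := fun y hy =>
    le_of_mul_le_mul_left (hmin t₀ ht₀ y hy) (Real.exp_pos _)
  have hx₀int : x₀ ∈ graphInterior ω Ω :=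
    (mem_graphInterior_or_mem_graphBoundary hx₀).resolve_right fun hb =>
      hneg.not_ge (hbdry t₀ (hsub ht₀) x₀ hb)
  have ht₀pos : 0 < t₀ := ht₀.1.lt_of_ne fun h => hneg.not_ge (h ▸ hinit x₀ hx₀int)
  have ht₀T : t₀ ∈ Ioo 0 T := ⟨ht₀pos, (hsub ht₀).2⟩
  have hlap : 0 ≤ graphLap ω μ (v t₀) x₀ := graphLap_nonneg_of_le_neighbours (hwnn x₀)
    (hμpos x₀).le fun y hy => hv_min y (mem_of_mem_graphInterior hx₀int hy)
  have hv' : v' t₀ x₀ ≤ (C + 1) * v t₀ x₀ :=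
    (hv_deriv x₀ hx₀ t₀ ht₀T).le_mul_of_exp_mul_le_left <| by
      filter_upwards [Ioo_mem_nhdsLT ht₀pos] with s hs
      exact hmin s ⟨hs.1.le, hs.2.le.trans ht₀.2⟩ x₀ hx₀
  have hk : k t₀ x₀ ≤ C := (abs_le.mp (hC t₀ (hsub ht₀) x₀ hx₀int)).2
  nlinarith [hineq t₀ ht₀T x₀ hx₀int]

/-- Strong maximum principle: if `∂ₜv − Δ_Ω v − k v ≥ 0` on `(0,T) × Ω°`, `v(0,·) ≥ 0`
on `Ω°`, and `v ≥ 0` on `[0,T) × ∂Ω`, with `v` bounded and `k` bounded, then `v ≥ 0`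
on `[0,T) × Ω`. -/
theorem strong_maximum_principle
    {V : Type*} [Countable V] (ω : V → V → ℝ) (μ : V → ℝ)
    (hsymm : ∀ x y, ω x y = ω y x)
    (hwnn : ∀ x y, 0 ≤ ω x y)
    (hμpos : ∀ x, 0 < μ x)
    (hlocfin : ∀ x, {y | 0 < ω x y}.Finite)
    (hdeg : ∀ x, ∃ y, 0 < ω x y)
    (hconn : ∀ x y, Relation.ReflTransGen (fun a b => 0 < ω a b) x y)
    (Dμ : ℝ) (hDμ : ∀ x, (∑' y, ω x y) / μ x ≤ Dμ)
    (Ω : Finset V) (hΩne : Ω.Nonempty) (hΩint : (graphInterior ω Ω).Nonempty)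
    (T : ℝ) (hT : 0 < T)
    (v v' : ℝ → V → ℝ) (k : ℝ → V → ℝ)
    (hv_bdd : ∃ C, ∀ t ∈ Ico (0:ℝ) T, ∀ x ∈ Ω, |v t x| ≤ C)
    (hv_cont : ∀ x ∈ Ω, ContinuousOn (fun t => v t x) (Ico (0:ℝ) T))
    (hv_deriv : ∀ x ∈ Ω, ∀ t ∈ Ioo (0:ℝ) T, HasDerivAt (fun s => v s x) (v' t x) t)
    (hk_bdd : ∃ C, ∀ t ∈ Ico (0:ℝ) T, ∀ x ∈ graphInterior ω Ω, |k t x| ≤ C)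
    (hineq : ∀ t ∈ Ioo (0:ℝ) T, ∀ x ∈ graphInterior ω Ω,
      0 ≤ v' t x - graphLap ω μ (v t) x - k t x * v t x)
    (hinit : ∀ x ∈ graphInterior ω Ω, 0 ≤ v 0 x)
    (hbdry : ∀ t ∈ Ico (0:ℝ) T, ∀ x ∈ graphBoundary ω Ω, 0 ≤ v t x) :
    ∀ t ∈ Ico (0:ℝ) T, ∀ x ∈ Ω, 0 ≤ v t x :=
  strong_maximum_principle_general ω μ hwnn hμpos Ω hΩne T v v' k hv_cont hv_deriv hk_bdd hineq
    hinit hbdry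
end

section
/- Let G = (V, ω, μ) be a locally finite connected weighted graph with D_μ < ∞, let T > 0, and let u : [0,T) × V → ℝ be nonnegative, continuous in t and differentiable in t. If ν ∈ V is such that ∂_t u(t,ν) − Δu(t,ν) ≥ 0 for all t ∈ [0,T), then u(t,ν) ≥ u(0,ν) · exp(−D_μ t) for all t ∈ [0,T). In particular, if u(0,ν) > 0 then u(t,ν) > 0 for all t ∈ [0,T). -/
open Set

/-- If `u ≥ 0` is differentiable in `t` on `[0,T)` and `∂ₜu(t,ν) − Δu(t,ν) ≥ 0`
at a vertex `ν`, then `u(t,ν) ≥ u(0,ν) e^{−D_μ t}` on `[0,T)`; in particular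
`u(0,ν) > 0` forces `u(t,ν) > 0` on `[0,T)`. -/
theorem exp_lower_bound_at_vertex
    {V : Type*} [Countable V] (ω : V → V → ℝ) (μ : V → ℝ)
    (hsymm : ∀ x y, ω x y = ω y x)
    (hwnn : ∀ x y, 0 ≤ ω x y)
    (hμpos : ∀ x, 0 < μ x)
    (hlocfin : ∀ x, {y | 0 < ω x y}.Finite)
    (hdeg : ∀ x, ∃ y, 0 < ω x y)
    (hconn : ∀ x y, Relation.ReflTransGen (fun a b => 0 < ω a b) x y)
    (Dμ : ℝ) (hDμ : ∀ x, (∑' y, ω x y) / μ x ≤ Dμ)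
    (T : ℝ) (hT : 0 < T)
    (u : ℝ → V → ℝ) (u' : ℝ → ℝ) (ν : V)
    (hu_nonneg : ∀ t ∈ Ico (0:ℝ) T, ∀ x, 0 ≤ u t x)
    (hu_deriv : ∀ t ∈ Ico (0:ℝ) T,
      HasDerivWithinAt (fun s => u s ν) (u' t) (Ico (0:ℝ) T) t)
    (hu_ineq : ∀ t ∈ Ico (0:ℝ) T, graphLap ω μ (u t) ν ≤ u' t) :
    (∀ t ∈ Ico (0:ℝ) T, u 0 ν * Real.exp (-Dμ * t) ≤ u t ν) ∧
    (0 < u 0 ν → ∀ t ∈ Ico (0:ℝ) T, 0 < u t ν) := by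
  classical
  set S : Finset V := (hlocfin ν).toFinset with hS
  have hzero : ∀ y ∉ S, ω ν y = 0 := by
    intro y hy
    have : ¬ 0 < ω ν y := by simpa [hS] using hy
    linarith [hwnn ν y]
  -- key differential inequality: -Dμ * u t ν ≤ u' t
  have key : ∀ t ∈ Ico (0:ℝ) T, -Dμ * u t ν ≤ u' t := by
    intro t ht
    have hsum1 : Summable (fun y => ω ν y * (u t y - u t ν)) :=
      summable_of_ne_finset_zero (s := S) (fun y hy => by simp [hzero y hy])
    have hsum2 : Summable (fun y => ω ν y * (-(u t ν))) :=
      summable_of_ne_finset_zero (s := S) (fun y hy => by simp [hzero y hy])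
    have hle : (∑' y, ω ν y * (-(u t ν))) ≤ ∑' y, ω ν y * (u t y - u t ν) := by
      refine Summable.tsum_le_tsum (fun y => ?_) hsum2 hsum1
      have := hu_nonneg t ht y
      nlinarith [hwnn ν y]
    have htsum : (∑' y, ω ν y * (-(u t ν))) = (∑' y, ω ν y) * (-(u t ν)) :=
      tsum_mul_right
    have hμ := hμpos ν
    have h1 : (∑' y, ω ν y) * (-(u t ν)) / μ ν ≤ graphLap ω μ (u t) ν := by
      unfold graphLap
      rw [← htsum]
      exact div_le_div_of_nonneg_right hle hμ.le |>.trans_eq rfl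
    have h2 : -Dμ * u t ν ≤ (∑' y, ω ν y) * (-(u t ν)) / μ ν := by
      have hun := hu_nonneg t ht ν
      have hD := hDμ ν
      have : (∑' y, ω ν y) * (-(u t ν)) / μ ν
          = -(((∑' y, ω ν y) / μ ν) * u t ν) := by ring
      rw [this]
      nlinarith
    linarith [hu_ineq t ht, h1, h2]
  -- the auxiliary function f t = u t ν * exp (Dμ * t) is monotone on Ico 0 T
  set f : ℝ → ℝ := fun s => u s ν * Real.exp (Dμ * s) with hf
  have hderiv : ∀ t ∈ Ico (0:ℝ) T,
      HasDerivWithinAt f (u' t * Real.exp (Dμ * t)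
        + u t ν * (Real.exp (Dμ * t) * Dμ)) (Ico (0:ℝ) T) t := by
    intro t ht
    have he : HasDerivAt (fun s : ℝ => Real.exp (Dμ * s))
        (Real.exp (Dμ * t) * Dμ) t := by
      simpa using (((hasDerivAt_id t).const_mul Dμ).exp)
    exact (hu_deriv t ht).mul he.hasDerivWithinAt
  have hcont : ContinuousOn f (Ico (0:ℝ) T) :=
    fun t ht => (hderiv t ht).continuousWithinAt
  have hdAt : ∀ t ∈ interior (Ico (0:ℝ) T),
      HasDerivAt f (u' t * Real.exp (Dμ * t)
        + u t ν * (Real.exp (Dμ * t) * Dμ)) t := by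
    intro t ht
    rw [interior_Ico] at ht
    have ht' : t ∈ Ico (0:ℝ) T := Ioo_subset_Ico_self ht
    have hmem : Ico (0:ℝ) T ∈ nhds t :=
      mem_nhds_iff.mpr ⟨Ioo 0 T, Ioo_subset_Ico_self, isOpen_Ioo, ht⟩
    exact (hderiv t ht').hasDerivAt hmem
  have hmono : MonotoneOn f (Ico (0:ℝ) T) := by
    apply monotoneOn_of_deriv_nonneg (convex_Ico (0:ℝ) T) hcont
    · exact fun t ht => (hdAt t ht).differentiableAt.differentiableWithinAt
    · intro t ht
      rw [(hdAt t ht).deriv]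
      rw [interior_Ico] at ht
      have ht' : t ∈ Ico (0:ℝ) T := Ioo_subset_Ico_self ht
      have hk := key t ht'
      have he : (0:ℝ) < Real.exp (Dμ * t) := Real.exp_pos _
      nlinarith
  have main : ∀ t ∈ Ico (0:ℝ) T, u 0 ν * Real.exp (-Dμ * t) ≤ u t ν := by
    intro t ht
    have h0 : (0:ℝ) ∈ Ico (0:ℝ) T := ⟨le_refl _, hT⟩
    have := hmono h0 ht ht.1
    have hf0 : f 0 = u 0 ν := by simp [hf]
    have hft : f t = u t ν * Real.exp (Dμ * t) := rfl
    rw [hf0, hft] at this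
    have he : (0:ℝ) < Real.exp (Dμ * t) := Real.exp_pos _
    have : u 0 ν * Real.exp (-(Dμ * t)) ≤ u t ν := by
      rw [Real.exp_neg]
      rw [mul_inv_le_iff₀ he]
      linarith
    simpa [neg_mul] using this
  refine ⟨main, fun h0 t ht => ?_⟩
  have := main t ht
  have he : (0:ℝ) < Real.exp (-Dμ * t) := Real.exp_pos _
  nlinarith
end

section
/- Let f : (0,∞) → ℝ be continuous with f(τ) > 0 for all τ > 0, let T > 0, and let J : [0,T) → ℝ be differentiable with J(s) > 0 and J'(s) ≥ f(J(s)) for all s ∈ [0,T). Then ∫_{J(0)}^{∞} dτ/f(τ) ≥ T (where the integral may be +∞). -/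
open Set MeasureTheory

/-- If `f > 0` is continuous on `(0,∞)`, `J : [0,T) → ℝ` is positive, differentiable,
and satisfies `J' ≥ f(J)`, then `∫_{J(0)}^{∞} dτ/f(τ) ≥ T` (the integral may be `+∞`). -/
theorem osgood_integral_lower_bound
    (f : ℝ → ℝ)
    (hf_cont : ContinuousOn f (Ioi (0:ℝ)))
    (hf_pos : ∀ τ > (0:ℝ), 0 < f τ)
    (T : ℝ) (hT : 0 < T)
    (J J' : ℝ → ℝ)
    (hJ_deriv : ∀ s ∈ Ico (0:ℝ) T, HasDerivWithinAt J (J' s) (Ico (0:ℝ) T) s)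
    (hJ_pos : ∀ s ∈ Ico (0:ℝ) T, 0 < J s)
    (hJ_ineq : ∀ s ∈ Ico (0:ℝ) T, f (J s) ≤ J' s) :
    ENNReal.ofReal T ≤ ∫⁻ τ in Ioi (J 0), ENNReal.ofReal (1 / f τ) := by
  set g : ℝ → ℝ := fun τ => 1 / f τ with hg_def
  have hg_cont : ContinuousOn g (Ioi (0:ℝ)) :=
    continuousOn_const.div hf_cont (fun x hx => (hf_pos x hx).ne')
  have h0T : (0:ℝ) ∈ Ico (0:ℝ) T := ⟨le_refl 0, hT⟩
  have hJ0 : 0 < J 0 := hJ_pos 0 h0T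
  have hJ_cont : ContinuousOn J (Ico (0:ℝ) T) :=
    fun s hs => (hJ_deriv s hs).continuousWithinAt
  have hint : interior (Ico (0:ℝ) T) = Ioo 0 T := interior_Ico
  -- J is monotone on [0,T)
  have hJmono : MonotoneOn J (Ico (0:ℝ) T) := by
    refine (strictMonoOn_of_hasDerivWithinAt_pos (convex_Ico 0 T) hJ_cont
      (fun x hx => ((hJ_deriv x (interior_subset hx)).mono interior_subset)) ?_).monotoneOn
    intro x hx
    have hx' : x ∈ Ico (0:ℝ) T := interior_subset hx
    exact lt_of_lt_of_le (hf_pos _ (hJ_pos x hx')) (hJ_ineq x hx')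
  have hJle : ∀ s ∈ Ico (0:ℝ) T, J 0 ≤ J s := fun s hs =>
    hJmono h0T hs hs.1
  -- interval integrability of g on [J 0, x] for x > 0
  have hgint : ∀ x > (0:ℝ), IntervalIntegrable g volume (J 0) x := by
    intro x hx
    refine (hg_cont.mono ?_).intervalIntegrable
    intro t ht
    exact lt_of_lt_of_le (lt_min hJ0 hx) ht.1
  -- FTC derivative of G
  set G : ℝ → ℝ := fun x => ∫ t in (J 0)..x, g t with hG_def
  have hG : ∀ x > (0:ℝ), HasDerivAt G (g x) x := by
    intro x hx
    exact intervalIntegral.integral_hasDerivAt_right (hgint x hx)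
      (hg_cont.stronglyMeasurableAtFilter isOpen_Ioi x hx)
      (hg_cont.continuousAt (isOpen_Ioi.mem_nhds hx))
  -- H s = G (J s) - s is monotone on [0, T)
  set H : ℝ → ℝ := fun s => G (J s) - s with hH_def
  have hH_deriv : ∀ s ∈ Ico (0:ℝ) T,
      HasDerivWithinAt H (g (J s) * J' s - 1) (Ico (0:ℝ) T) s := by
    intro s hs
    exact ((hG (J s) (hJ_pos s hs)).comp_hasDerivWithinAt s (hJ_deriv s hs)).sub
      (hasDerivWithinAt_id s _)
  have hHmono : MonotoneOn H (Ico (0:ℝ) T) := by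
    refine monotoneOn_of_hasDerivWithinAt_nonneg (convex_Ico 0 T)
      (fun s hs => (hH_deriv s hs).continuousWithinAt)
      (fun x hx => (hH_deriv x (interior_subset hx)).mono interior_subset) ?_
    intro x hx
    have hx' : x ∈ Ico (0:ℝ) T := interior_subset hx
    have hfx : 0 < f (J x) := hf_pos _ (hJ_pos x hx')
    have : (1:ℝ) ≤ g (J x) * J' x := by
      show (1:ℝ) ≤ 1 / f (J x) * J' x
      rw [one_div, inv_mul_eq_div, le_div_iff₀ hfx, one_mul]
      exact hJ_ineq x hx'
    linarith
  -- hence s ≤ G (J s) for s ∈ [0, T)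
  have hkey : ∀ s ∈ Ico (0:ℝ) T, s ≤ G (J s) := by
    intro s hs
    have := hHmono h0T hs hs.1
    simp only [hH_def, hG_def, intervalIntegral.integral_same, sub_zero] at this
    linarith
  -- relate G (J s) to the lintegral
  have hbound : ∀ s ∈ Ico (0:ℝ) T,
      ENNReal.ofReal s ≤ ∫⁻ τ in Ioi (J 0), ENNReal.ofReal (1 / f τ) := by
    intro s hs
    have hJs : 0 < J s := hJ_pos s hs
    have hle : J 0 ≤ J s := hJle s hs
    have hii : IntervalIntegrable g volume (J 0) (J s) := hgint _ hJs
    have hGeq : G (J s) = ∫ t in Ioc (J 0) (J s), g t := by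
      rw [hG_def]
      exact intervalIntegral.integral_of_le hle
    have hnn : 0 ≤ᵐ[volume.restrict (Ioc (J 0) (J s))] g := by
      refine ae_restrict_of_forall_mem measurableSet_Ioc ?_
      intro t ht
      exact le_of_lt (div_pos one_pos (hf_pos t (lt_trans hJ0 ht.1)))
    have hInt : Integrable g (volume.restrict (Ioc (J 0) (J s))) :=
      (intervalIntegrable_iff_integrableOn_Ioc_of_le hle).mp hii
    calc ENNReal.ofReal s ≤ ENNReal.ofReal (G (J s)) :=
          ENNReal.ofReal_le_ofReal (hkey s hs)
      _ = ∫⁻ t in Ioc (J 0) (J s), ENNReal.ofReal (g t) := by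
          rw [hGeq]; exact ofReal_integral_eq_lintegral_ofReal hInt hnn
      _ ≤ ∫⁻ τ in Ioi (J 0), ENNReal.ofReal (1 / f τ) :=
          lintegral_mono_set Ioc_subset_Ioi_self
  -- take the limit s → T⁻
  have htend : Filter.Tendsto (fun s : ℝ => ENNReal.ofReal s) (nhdsWithin T (Iio T))
      (nhds (ENNReal.ofReal T)) :=
    (ENNReal.continuous_ofReal.tendsto T).mono_left nhdsWithin_le_nhds
  refine le_of_tendsto htend ?_
  filter_upwards [Ioo_mem_nhdsLT_of_mem (show T ∈ Ioc (0:ℝ) T from ⟨hT, le_refl T⟩)] with s hs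
  exact hbound s ⟨le_of_lt hs.1, hs.2⟩
end

section
/- Let G = (V, ω, μ) be a locally finite connected weighted graph with D_μ < ∞, and Ω ⊆ V a nonempty finite subset with nonempty interior Ω°. Let f : [0,∞) → ℝ be continuous and convex with f(0) ≥ 0, and let u : [0,∞) × Ω → ℝ be nonnegative, continuous and differentiable in t, with u(t,x) = 0 for all (t,x) ∈ [0,∞) × ∂Ω and ∂_t u(t,x) = Δ_Ω u(t,x) + f(u(t,x)) for all (t,x) ∈ (0,∞) × Ω°. Define J(t) = ∑_{x∈Ω°} μ(x) u(t,x) φ₁(x). Then J is differentiable and J'(t) ≥ −λ₁ J(t) + f(J(t)) for all t > 0. -/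
open Set

/-!
Testing the equation against `μ φ₁` and summing over `Ω°`, Green's identity moves the
Laplacian from `u` onto `φ₁` (both vanish on `∂Ω`), which turns `∑ μ φ₁ Δu` into `-λ₁ J`.
The remaining term `∑ μ φ₁ f(u)` dominates `f(J)` by Jensen's inequality, since the weights
`μ φ₁` form a probability distribution on `Ω°`.
-/

open Finset

section WeightedGraph

variable {V : Type*} {ω : V → V → ℝ} {μ : V → ℝ} {Ω : Finset V}

open Classical in
theorem graphInterior_subset : graphInterior ω Ω ⊆ Ω := fun _ hx => (mem_filter.mp hx).1

open Classical in
theorem mem_graphBoundary_of_notMem_graphInterior {x : V} (hx : x ∈ Ω)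
    (hxI : x ∉ graphInterior ω Ω) : x ∈ graphBoundary ω Ω := by
  simp only [graphInterior, graphBoundary, mem_filter, not_and, not_forall] at hxI ⊢
  obtain ⟨y, hxy, hy⟩ := hxI hx
  exact ⟨hx, y, hy, hxy⟩

open Classical in
theorem mul_graphLap_eq_sum_of_mem_graphInterior (hwnn : ∀ x y, 0 ≤ ω x y)
    {x : V} (hμx : μ x ≠ 0) (hx : x ∈ graphInterior ω Ω) (h : V → ℝ) :
    μ x * graphLap ω μ h x = ∑ y ∈ Ω, ω x y * (h y - h x) := by
  have hxΩ : ∀ y, 0 < ω x y → y ∈ Ω := (mem_filter.mp hx).2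
  have htsum : ∑' y, ω x y * (h y - h x) = ∑ y ∈ Ω, ω x y * (h y - h x) := by
    refine tsum_eq_sum fun y hy => ?_
    have hω : ω x y = 0 := (hwnn x y).eq_or_lt.elim Eq.symm fun hpos => absurd (hxΩ y hpos) hy
    rw [hω, zero_mul]
  rw [graphLap, htsum, mul_div_cancel₀ _ hμx]

theorem sum_mul_sum_weighted_sub_comm (hsymm : ∀ x y, ω x y = ω y x) (s : Finset V)
    (g h : V → ℝ) :
    ∑ x ∈ s, g x * ∑ y ∈ s, ω x y * (h y - h x) =
      ∑ x ∈ s, h x * ∑ y ∈ s, ω x y * (g y - g x) := by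
  simp only [mul_sum, mul_sub, sum_sub_distrib]
  congr 1
  · rw [sum_comm]
    refine sum_congr rfl fun x _ => sum_congr rfl fun y _ => ?_
    rw [hsymm]
    ring
  · exact sum_congr rfl fun x _ => sum_congr rfl fun y _ => by ring

theorem sum_mul_graphLap_comm (hsymm : ∀ x y, ω x y = ω y x) (hwnn : ∀ x y, 0 ≤ ω x y)
    (hμ : ∀ x, μ x ≠ 0) {g h : V → ℝ}
    (hg : ∀ x ∈ Ω, x ∉ graphInterior ω Ω → g x = 0)
    (hh : ∀ x ∈ Ω, x ∉ graphInterior ω Ω → h x = 0) :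
    ∑ x ∈ graphInterior ω Ω, μ x * g x * graphLap ω μ h x =
      ∑ x ∈ graphInterior ω Ω, μ x * h x * graphLap ω μ g x := by
  have extend : ∀ {a b : V → ℝ}, (∀ x ∈ Ω, x ∉ graphInterior ω Ω → a x = 0) →
      ∑ x ∈ graphInterior ω Ω, μ x * a x * graphLap ω μ b x =
        ∑ x ∈ Ω, a x * ∑ y ∈ Ω, ω x y * (b y - b x) := by
    intro a b ha
    refine (sum_congr rfl fun x hx => ?_).trans
      (sum_subset graphInterior_subset fun x hx hxI => by rw [ha x hx hxI, zero_mul])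
    rw [← mul_graphLap_eq_sum_of_mem_graphInterior hwnn (hμ x) hx]
    ring
  rw [extend hg, extend hh, sum_mul_sum_weighted_sub_comm hsymm]

end WeightedGraph

theorem eigenfunction_functional_differential_inequality_general
    {V : Type*} (ω : V → V → ℝ) (μ : V → ℝ)
    (hsymm : ∀ x y, ω x y = ω y x)
    (hwnn : ∀ x y, 0 ≤ ω x y)
    (hμpos : ∀ x, 0 < μ x)
    (Ω : Finset V)
    -- the nonlinearity
    (f : ℝ → ℝ)
    (hf_conv : ConvexOn ℝ (Ici (0:ℝ)) f)
    -- `λ₁`, the smallest eigenvalue of `−Δ_Ω`, with positive normalized eigenfunction `φ₁`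
    (lam₁ : ℝ)
    (φ₁ : V → ℝ)
    (hφ₁_pos : ∀ x ∈ graphInterior ω Ω, 0 < φ₁ x)
    (hφ₁_zero : ∀ x ∉ graphInterior ω Ω, φ₁ x = 0)
    (hφ₁_norm : ∑ x ∈ graphInterior ω Ω, μ x * φ₁ x = 1)
    (hφ₁_eig : ∀ x ∈ graphInterior ω Ω, graphLap ω μ φ₁ x = -lam₁ * φ₁ x)
    -- the nonnegative solution `u` of the Dirichlet problem
    (u u' : ℝ → V → ℝ)
    (hu_nonneg : ∀ t ≥ (0:ℝ), ∀ x ∈ Ω, 0 ≤ u t x)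
    (hu_deriv : ∀ x ∈ Ω, ∀ t > (0:ℝ), HasDerivAt (fun s => u s x) (u' t x) t)
    (hu_bdry : ∀ t ≥ (0:ℝ), ∀ x ∈ graphBoundary ω Ω, u t x = 0)
    (hu_eq : ∀ t > (0:ℝ), ∀ x ∈ graphInterior ω Ω,
      u' t x = graphLap ω μ (u t) x + f (u t x)) :
    -- conclusion: `J` is differentiable and `J' ≥ −λ₁ J + f(J)` for `t > 0`
    ∀ t > (0:ℝ),
      HasDerivAt (fun s => ∑ x ∈ graphInterior ω Ω, μ x * u s x * φ₁ x)
        (∑ x ∈ graphInterior ω Ω, μ x * u' t x * φ₁ x) t ∧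
      -lam₁ * (∑ x ∈ graphInterior ω Ω, μ x * u t x * φ₁ x) +
          f (∑ x ∈ graphInterior ω Ω, μ x * u t x * φ₁ x) ≤
        ∑ x ∈ graphInterior ω Ω, μ x * u' t x * φ₁ x := by
  intro t ht
  set I := graphInterior ω Ω
  have hIΩ : I ⊆ Ω := graphInterior_subset
  refine ⟨HasDerivAt.fun_sum fun x hx =>
    ((hu_deriv x (hIΩ hx) t ht).const_mul (μ x)).mul_const (φ₁ x), ?_⟩
  have hu_vanish : ∀ x ∈ Ω, x ∉ I → u t x = 0 := fun x hx hxI =>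
    hu_bdry t ht.le x (mem_graphBoundary_of_notMem_graphInterior hx hxI)
  have green := sum_mul_graphLap_comm hsymm hwnn (fun x => (hμpos x).ne')
    (fun x _ hxI => hφ₁_zero x hxI) hu_vanish
  have jensen : f (∑ x ∈ I, (μ x * φ₁ x) • u t x) ≤ ∑ x ∈ I, (μ x * φ₁ x) • f (u t x) :=
    hf_conv.map_sum_le (fun x hx => (mul_pos (hμpos x) (hφ₁_pos x hx)).le) hφ₁_norm
      fun x hx => hu_nonneg t ht.le x (hIΩ hx)
  simp only [smul_eq_mul] at jensen
  calc -lam₁ * (∑ x ∈ I, μ x * u t x * φ₁ x) + f (∑ x ∈ I, μ x * u t x * φ₁ x)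
      = ∑ x ∈ I, μ x * u t x * graphLap ω μ φ₁ x
          + f (∑ x ∈ I, μ x * φ₁ x * u t x) := by
        rw [mul_sum]
        congr 1
        · exact sum_congr rfl fun x hx => by rw [hφ₁_eig x hx]; ring
        · exact congrArg f (sum_congr rfl fun x _ => by ring)
    _ ≤ ∑ x ∈ I, μ x * φ₁ x * graphLap ω μ (u t) x + ∑ x ∈ I, μ x * φ₁ x * f (u t x) := by
        rw [green]
        gcongr
    _ = ∑ x ∈ I, μ x * u' t x * φ₁ x := by
        rw [← sum_add_distrib]
        exact sum_congr rfl fun x hx => by rw [hu_eq t ht x hx]; ring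

/-- For a nonnegative solution `u` of the Dirichlet problem `∂ₜu = Δ_Ω u + f(u)` with
zero boundary values, the function `J(t) = ∑_{x∈Ω°} μ(x) u(t,x) φ₁(x)` is differentiable
and satisfies `J'(t) ≥ −λ₁ J(t) + f(J(t))` for all `t > 0`. -/
theorem eigenfunction_functional_differential_inequality
    {V : Type*} [Countable V] (ω : V → V → ℝ) (μ : V → ℝ)
    (hsymm : ∀ x y, ω x y = ω y x)
    (hwnn : ∀ x y, 0 ≤ ω x y)
    (hμpos : ∀ x, 0 < μ x)
    (hlocfin : ∀ x, {y | 0 < ω x y}.Finite)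
    (hdeg : ∀ x, ∃ y, 0 < ω x y)
    (hconn : ∀ x y, Relation.ReflTransGen (fun a b => 0 < ω a b) x y)
    (Dμ : ℝ) (hDμ : ∀ x, (∑' y, ω x y) / μ x ≤ Dμ)
    (Ω : Finset V) (hΩne : Ω.Nonempty) (hΩint : (graphInterior ω Ω).Nonempty)
    -- the nonlinearity
    (f : ℝ → ℝ)
    (hf_cont : ContinuousOn f (Ici (0:ℝ)))
    (hf_conv : ConvexOn ℝ (Ici (0:ℝ)) f)
    (hf_nonneg : 0 ≤ f 0)
    -- `λ₁`, the smallest eigenvalue of `−Δ_Ω`, with positive normalized eigenfunction `φ₁`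
    (lam₁ : ℝ) (hlam₁_pos : 0 < lam₁)
    (φ₁ : V → ℝ)
    (hφ₁_pos : ∀ x ∈ graphInterior ω Ω, 0 < φ₁ x)
    (hφ₁_zero : ∀ x ∉ graphInterior ω Ω, φ₁ x = 0)
    (hφ₁_norm : ∑ x ∈ graphInterior ω Ω, μ x * φ₁ x = 1)
    (hφ₁_eig : ∀ x ∈ graphInterior ω Ω, graphLap ω μ φ₁ x = -lam₁ * φ₁ x)
    (hlam₁_min : ∀ (lam : ℝ) (ψ : V → ℝ), (∀ x ∉ graphInterior ω Ω, ψ x = 0) → ψ ≠ 0 →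
      (∀ x ∈ graphInterior ω Ω, graphLap ω μ ψ x = -lam * ψ x) → lam₁ ≤ lam)
    -- the nonnegative solution `u` of the Dirichlet problem
    (u u' : ℝ → V → ℝ)
    (hu_nonneg : ∀ t ≥ (0:ℝ), ∀ x ∈ Ω, 0 ≤ u t x)
    (hu_cont : ∀ x ∈ Ω, ContinuousOn (fun t => u t x) (Ici (0:ℝ)))
    (hu_deriv : ∀ x ∈ Ω, ∀ t > (0:ℝ), HasDerivAt (fun s => u s x) (u' t x) t)
    (hu_bdry : ∀ t ≥ (0:ℝ), ∀ x ∈ graphBoundary ω Ω, u t x = 0)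
    (hu_eq : ∀ t > (0:ℝ), ∀ x ∈ graphInterior ω Ω,
      u' t x = graphLap ω μ (u t) x + f (u t x)) :
    -- conclusion: `J` is differentiable and `J' ≥ −λ₁ J + f(J)` for `t > 0`
    ∀ t > (0:ℝ),
      HasDerivAt (fun s => ∑ x ∈ graphInterior ω Ω, μ x * u s x * φ₁ x)
        (∑ x ∈ graphInterior ω Ω, μ x * u' t x * φ₁ x) t ∧
      -lam₁ * (∑ x ∈ graphInterior ω Ω, μ x * u t x * φ₁ x) +
          f (∑ x ∈ graphInterior ω Ω, μ x * u t x * φ₁ x) ≤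
        ∑ x ∈ graphInterior ω Ω, μ x * u' t x * φ₁ x :=
  eigenfunction_functional_differential_inequality_general ω μ hsymm hwnn hμpos Ω f hf_conv lam₁ φ₁
    hφ₁_pos hφ₁_zero hφ₁_norm hφ₁_eig u u' hu_nonneg hu_deriv hu_bdry hu_eq
end
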